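/- Let X and Y be Polish spaces (separable, completely metrizable topological spaces) equipped with their Borel σ-algebras, T : X → Y a Borel measurable map, d : Y × Y → ℝ≥0∞ a Borel measurable cost function, and a, b Borel probability measures on X. Then W(d)(T_# a, T_# b) = W(T̃d)(a, b): the infimum over couplings Δ of (T_# a, T_# b) of ∫⁻ d dΔ equals the infimum over couplings Σ of (a, b) of ∫⁻ d(T x, T x') dΣ(x,x'). -/

import Mathlib

open MeasureTheory
open scoped ENNReal

/-- The Wasserstein (Kantorovich) cost: infimum of the transport cost over all
couplings of `μ` and `ν`. -/
noncomputable def wassersteinCost {Z : Type*} [MeasurableSpace Z]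
    (c : Z × Z → ℝ≥0∞) (μ ν : Measure Z) : ℝ≥0∞ :=
  ⨅ (S : Measure (Z × Z)) (_ : IsProbabilityMeasure S)
    (_ : S.map Prod.fst = μ) (_ : S.map Prod.snd = ν), ∫⁻ p, c p ∂S

/-!
Disintegrate `a` along `T`: the conditional law `κₐ y` of `x` given `T x = y` is carried by the
fiber `T ⁻¹' {y}` for `T_# a`-a.e. `y`. Pushing a coupling of `(a, b)` forward by `T × T` gives a
coupling of `(T_# a, T_# b)` with the same cost; conversely, a coupling `Δ` of `(T_# a, T_# b)` lifts
to the coupling `∫ κₐ y ⊗ κ_b y' dΔ(y, y')` of `(a, b)`, whose image under `T × T` is `Δ` again.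
Fibers need not be measurable, so "carried by the fiber" is used in the weak form
`κₐ y (T ⁻¹' B) = 𝟙_B y` a.e., one measurable `B` at a time, which suffices on rectangles.
-/

open ProbabilityTheory

lemma wassersteinCost_le_lintegral {Z : Type*} [MeasurableSpace Z] (c : Z × Z → ℝ≥0∞)
    {μ ν : Measure Z} (S : Measure (Z × Z)) [hS : IsProbabilityMeasure S]
    (h₁ : S.map Prod.fst = μ) (h₂ : S.map Prod.snd = ν) :
    wassersteinCost c μ ν ≤ ∫⁻ p, c p ∂S :=
  iInf₂_le_of_le S hS <| iInf₂_le h₁ h₂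

lemma le_wassersteinCost {Z : Type*} [MeasurableSpace Z] {c : Z × Z → ℝ≥0∞}
    {μ ν : Measure Z} {w : ℝ≥0∞}
    (h : ∀ S : Measure (Z × Z), IsProbabilityMeasure S → S.map Prod.fst = μ →
      S.map Prod.snd = ν → w ≤ ∫⁻ p, c p ∂S) :
    w ≤ wassersteinCost c μ ν :=
  le_iInf₂ fun S hS => le_iInf₂ (h S hS)

section PushForward

variable {X Y : Type*} [MeasurableSpace X] [MeasurableSpace Y] {T : X → Y}

lemma map_prodMap_map_fst (hT : Measurable T) (S : Measure (X × X)) :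
    (S.map (Prod.map T T)).map Prod.fst = (S.map Prod.fst).map T := by
  rw [Measure.map_map measurable_fst (hT.prodMap hT), Measure.map_map hT measurable_fst]
  rfl

lemma map_prodMap_map_snd (hT : Measurable T) (S : Measure (X × X)) :
    (S.map (Prod.map T T)).map Prod.snd = (S.map Prod.snd).map T := by
  rw [Measure.map_map measurable_snd (hT.prodMap hT), Measure.map_map hT measurable_snd]
  rfl

end PushForward

section Graph

variable {X Y : Type*} [MeasurableSpace X] [MeasurableSpace Y] {T : X → Y} {a : Measure X}

lemma map_graph_fst (hT : Measurable T) : (a.map fun x => (T x, x)).fst = a.map T := by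
  rw [Measure.fst, Measure.map_map measurable_fst (by fun_prop)]
  rfl

lemma map_graph_snd (hT : Measurable T) : (a.map fun x => (T x, x)).snd = a := by
  rw [Measure.snd, Measure.map_map measurable_snd (by fun_prop)]
  exact Measure.map_id

end Graph

section FiberKernel

variable {X Y : Type*} [MeasurableSpace X] [StandardBorelSpace X] [Nonempty X]
  [MeasurableSpace Y] {T : X → Y}

noncomputable def fiberKernel (T : X → Y) (a : Measure X) [IsFiniteMeasure a] : Kernel Y X :=
  (a.map fun x => (T x, x)).condKernel

instance (T : X → Y) (a : Measure X) [IsFiniteMeasure a] : IsMarkovKernel (fiberKernel T a) := by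
  unfold fiberKernel; infer_instance

variable {a : Measure X} [IsFiniteMeasure a]

lemma fiberKernel_comp_map (hT : Measurable T) : fiberKernel T a ∘ₘ a.map T = a := by
  rw [fiberKernel, ← map_graph_fst hT, ← Measure.snd_compProd, Measure.disintegrate,
    map_graph_snd hT]

lemma fiberKernel_apply_preimage_ae (hT : Measurable T) {B : Set Y} (hB : MeasurableSet B) :
    ∀ᵐ y ∂a.map T, fiberKernel T a y (T ⁻¹' B) = B.indicator 1 y := by
  refine ae_eq_of_forall_setLIntegral_eq_of_sigmaFinite
    ((fiberKernel T a).measurable_coe (hT hB)) (measurable_one.indicator hB) fun A hA _ => ?_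
  -- both sides integrate over `A` to `a (T ⁻¹' (A ∩ B))`
  rw [fiberKernel, ← map_graph_fst hT, Measure.setLIntegral_condKernel_eq_measure_prod hA (hT hB),
    map_graph_fst hT, lintegral_indicator_one hB, Measure.restrict_apply hB,
    Measure.map_apply (by fun_prop) (hA.prod (hT hB)), Measure.map_apply hT (hB.inter hA)]
  congr 1
  ext x
  simp [and_comm]

end FiberKernel

section LiftCoupling

variable {X Y : Type*} [MeasurableSpace X] [StandardBorelSpace X] [Nonempty X]
  [MeasurableSpace Y] {T : X → Y} {a b : Measure X} [IsFiniteMeasure a] [IsFiniteMeasure b]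
  {Δ : Measure (Y × Y)}

variable (T a b Δ) in
noncomputable def liftCoupling : Measure (X × X) :=
  (fiberKernel T a ∥ₖ fiberKernel T b) ∘ₘ Δ

instance [IsProbabilityMeasure Δ] : IsProbabilityMeasure (liftCoupling T a b Δ) := by
  unfold liftCoupling; infer_instance

lemma liftCoupling_apply_prod {A B : Set X} (hA : MeasurableSet A) (hB : MeasurableSet B) :
    liftCoupling T a b Δ (A ×ˢ B) = ∫⁻ q, fiberKernel T a q.1 A * fiberKernel T b q.2 B ∂Δ := by
  simp_rw [liftCoupling, Measure.bind_apply (hA.prod hB) (Kernel.aemeasurable _),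
    Kernel.parallelComp_apply_prod]

lemma liftCoupling_map_fst (hT : Measurable T) (h₁ : Δ.map Prod.fst = a.map T) :
    (liftCoupling T a b Δ).map Prod.fst = a := by
  ext A hA
  rw [Measure.map_apply measurable_fst hA, ← Set.prod_univ, liftCoupling_apply_prod hA .univ]
  simp_rw [measure_univ, mul_one]
  rw [← lintegral_map ((fiberKernel T a).measurable_coe hA) measurable_fst, h₁,
    ← Measure.bind_apply hA (Kernel.aemeasurable _), fiberKernel_comp_map hT]

lemma liftCoupling_map_snd (hT : Measurable T) (h₂ : Δ.map Prod.snd = b.map T) :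
    (liftCoupling T a b Δ).map Prod.snd = b := by
  ext B hB
  rw [Measure.map_apply measurable_snd hB, ← Set.univ_prod, liftCoupling_apply_prod .univ hB]
  simp_rw [measure_univ, one_mul]
  rw [← lintegral_map ((fiberKernel T b).measurable_coe hB) measurable_snd, h₂,
    ← Measure.bind_apply hB (Kernel.aemeasurable _), fiberKernel_comp_map hT]

lemma liftCoupling_map_prodMap [IsFiniteMeasure Δ] (hT : Measurable T)
    (h₁ : Δ.map Prod.fst = a.map T) (h₂ : Δ.map Prod.snd = b.map T) :
    (liftCoupling T a b Δ).map (Prod.map T T) = Δ := by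
  refine (Measure.ext_prod fun {B D} hB hD => ?_).symm
  have hfst : ∀ᵐ q ∂Δ, fiberKernel T a q.1 (T ⁻¹' B) = B.indicator 1 q.1 :=
    ae_of_ae_map measurable_fst.aemeasurable (h₁ ▸ fiberKernel_apply_preimage_ae hT hB)
  have hsnd : ∀ᵐ q ∂Δ, fiberKernel T b q.2 (T ⁻¹' D) = D.indicator 1 q.2 :=
    ae_of_ae_map measurable_snd.aemeasurable (h₂ ▸ fiberKernel_apply_preimage_ae hT hD)
  calc Δ (B ×ˢ D) = ∫⁻ q, B.indicator 1 q.1 * D.indicator 1 q.2 ∂Δ := by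
        simp_rw [← Set.indicator_prod_one, lintegral_indicator_one (hB.prod hD)]
    _ = ∫⁻ q, fiberKernel T a q.1 (T ⁻¹' B) * fiberKernel T b q.2 (T ⁻¹' D) ∂Δ := by
        refine lintegral_congr_ae ?_
        filter_upwards [hfst, hsnd] with q hq₁ hq₂
        rw [hq₁, hq₂]
    _ = (liftCoupling T a b Δ).map (Prod.map T T) (B ×ˢ D) := by
        rw [Measure.map_apply (hT.prodMap hT) (hB.prod hD)]
        exact (liftCoupling_apply_prod (hT hB) (hT hD)).symm

end LiftCoupling

theorem wassersteinCost_map_eq_general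
    {X Y : Type*} [TopologicalSpace X] [PolishSpace X] [MeasurableSpace X] [BorelSpace X]
    [MeasurableSpace Y]
    (T : X → Y) (hT : Measurable T)
    (d : Y × Y → ℝ≥0∞) (hd : Measurable d)
    (a b : Measure X) [IsProbabilityMeasure a] [IsProbabilityMeasure b] :
    wassersteinCost d (a.map T) (b.map T) =
      wassersteinCost (fun p => d (T p.1, T p.2)) a b := by
  have : Nonempty X := a.nonempty_of_neZero
  apply le_antisymm
  · refine le_wassersteinCost fun S _ h₁ h₂ => ?_
    have := Measure.isProbabilityMeasure_map (μ := S) (hT.prodMap hT).aemeasurable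
    calc wassersteinCost d (a.map T) (b.map T)
        ≤ ∫⁻ p, d p ∂S.map (Prod.map T T) := wassersteinCost_le_lintegral d _
          (by rw [map_prodMap_map_fst hT, h₁]) (by rw [map_prodMap_map_snd hT, h₂])
      _ = ∫⁻ p, d (T p.1, T p.2) ∂S := lintegral_map hd (hT.prodMap hT)
  · refine le_wassersteinCost fun Δ _ h₁ h₂ => ?_
    calc wassersteinCost (fun p => d (T p.1, T p.2)) a b
        ≤ ∫⁻ p, d (T p.1, T p.2) ∂liftCoupling T a b Δ := wassersteinCost_le_lintegral _ _
          (liftCoupling_map_fst hT h₁) (liftCoupling_map_snd hT h₂)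
      _ = ∫⁻ p, d p ∂(liftCoupling T a b Δ).map (Prod.map T T) :=
          (lintegral_map hd (hT.prodMap hT)).symm
      _ = ∫⁻ p, d p ∂Δ := by rw [liftCoupling_map_prodMap hT h₁ h₂]

/-- for `T` (deterministic) measurable between Polish spaces,
`W(d)(T_# a, T_# b) = W(T̃d)(a, b)`. -/
theorem wassersteinCost_map_eq
    {X Y : Type*} [TopologicalSpace X] [PolishSpace X] [MeasurableSpace X] [BorelSpace X]
    [TopologicalSpace Y] [PolishSpace Y] [MeasurableSpace Y] [BorelSpace Y]
    (T : X → Y) (hT : Measurable T)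
    (d : Y × Y → ℝ≥0∞) (hd : Measurable d)
    (a b : Measure X) [IsProbabilityMeasure a] [IsProbabilityMeasure b] :
    wassersteinCost d (a.map T) (b.map T) =
      wassersteinCost (fun p => d (T p.1, T p.2)) a b :=
  wassersteinCost_map_eq_general T hT d hd a b
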